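/- arXiv:0802.2820 — 6 statements merged into one kernel-verified Lean document; each statement's English description precedes it below -/
import Mathlib

section
/- Let Q be a real Hilbert space and A : Q → Q a bounded linear operator such that exp(sA) is unitary for every s ∈ ℝ (equivalently, A is skew-adjoint). Let L : Q × Q → ℝ be such that v ↦ L(x,v) is Fréchet differentiable for each x, with momentum π : Q × Q → Q, assume π is Fréchet differentiable, and assume the weak symmetry property π(exp(sA)x, exp(sA)v) = exp(sA) π(x,v) for all s ∈ ℝ and (x,v) ∈ Q × Q. Define the integral of motion I(x,v) = ⟨π(x,v), A x⟩ and let σ be the symplectic form associated with π. Then for all (x,v) ∈ Q × Q and all tangent vectors (x́,v́) ∈ Q × Q one has σ|_{(x,v)}((Ax, Av),(x́,v́)) = DI|_{(x,v)}(x́,v́); that is, the infinitesimal generator of the lifted symmetry group is the symplectic gradient of the Noether integral I. -/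
/-!
Differentiating the two group identities at `s = 0` gives everything. Unitarity of `exp(sA)`
makes `A` skew-adjoint, and the weak symmetry gives `Dπ(Ax, Av) = A π(x,v)`. By the product
rule `DI(x́,v́) = ⟪Dπ(x́,v́), Ax⟫ + ⟪π, Ax́⟫`, and skew-adjointness turns the last term into
`-⟪Aπ, x́⟫ = -⟪Dπ(Ax,Av), x́⟫`, which is `σ((Ax,Av),(x́,v́))`.
-/

open scoped RealInnerProductSpace

section OperatorExp

variable {E : Type*} [NormedAddCommGroup E] [NormedSpace ℝ E] [CompleteSpace E]

theorem hasDerivAt_exp_smul_apply_zero (A : E →L[ℝ] E) (y : E) :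
    HasDerivAt (fun s : ℝ => NormedSpace.exp (s • A) y) (A y) 0 := by
  simpa using (hasDerivAt_exp_smul_const A (0 : ℝ)).clm_apply (hasDerivAt_const 0 y)

theorem HasFDerivAt.apply_generator_of_equivariant
    {F : Type*} [NormedAddCommGroup F] [NormedSpace ℝ F] [CompleteSpace F]
    {A : E →L[ℝ] E} {B : F →L[ℝ] F} {p : E × E → F} {D : E × E →L[ℝ] F} {x v : E}
    (hD : HasFDerivAt p D (x, v))
    (hsym : ∀ s : ℝ, p (NormedSpace.exp (s • A) x, NormedSpace.exp (s • A) v)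
      = NormedSpace.exp (s • B) (p (x, v))) :
    D (A x, A v) = B (p (x, v)) := by
  have hcurve := (hasDerivAt_exp_smul_apply_zero A x).prodMk (hasDerivAt_exp_smul_apply_zero A v)
  have hD' : HasFDerivAt p D
      (NormedSpace.exp ((0 : ℝ) • A) x, NormedSpace.exp ((0 : ℝ) • A) v) := by
    simpa using hD
  have hlhs := hD'.comp_hasDerivAt (0 : ℝ) hcurve
  have hrhs : HasDerivAt (fun s : ℝ => p (NormedSpace.exp (s • A) x, NormedSpace.exp (s • A) v))
      (B (p (x, v))) 0 := by
    simpa only [hsym] using hasDerivAt_exp_smul_apply_zero B (p (x, v))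
  exact hlhs.unique hrhs

end OperatorExp

theorem inner_map_left_eq_neg_of_exp_smul_isometry
    {Q : Type*} [NormedAddCommGroup Q] [InnerProductSpace ℝ Q] [CompleteSpace Q]
    {A : Q →L[ℝ] Q}
    (hU : ∀ (s : ℝ) (x y : Q),
      ⟪NormedSpace.exp (s • A) x, NormedSpace.exp (s • A) y⟫ = ⟪x, y⟫)
    (a b : Q) :
    ⟪A a, b⟫ = -⟪a, A b⟫ := by
  have hprod : HasDerivAt (fun s : ℝ => ⟪NormedSpace.exp (s • A) a, NormedSpace.exp (s • A) b⟫)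
      (⟪a, A b⟫ + ⟪A a, b⟫) 0 := by
    simpa using
      (hasDerivAt_exp_smul_apply_zero A a).inner ℝ (hasDerivAt_exp_smul_apply_zero A b)
  have hconst : HasDerivAt (fun s : ℝ => ⟪NormedSpace.exp (s • A) a, NormedSpace.exp (s • A) b⟫)
      0 0 := by
    simpa only [hU] using hasDerivAt_const (0 : ℝ) ⟪a, b⟫
  linarith [hprod.unique hconst]

theorem symmetry_generator_is_symplectic_gradient_of_noether_integral_general
    {Q : Type*} [NormedAddCommGroup Q] [InnerProductSpace ℝ Q] [CompleteSpace Q]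
    (A : Q →L[ℝ] Q)
    (hU : ∀ (s : ℝ) (x y : Q),
      ⟪NormedSpace.exp (s • A) x, NormedSpace.exp (s • A) y⟫ = ⟪x, y⟫)
    (L : Q → Q → ℝ) (p : Q × Q → Q)
    (Dp : Q × Q → (Q × Q →L[ℝ] Q))
    (hDp : ∀ z : Q × Q, HasFDerivAt p (Dp z) z)
    (hsym : ∀ (s : ℝ) (x v : Q),
      p (NormedSpace.exp (s • A) x, NormedSpace.exp (s • A) v)
        = NormedSpace.exp (s • A) (p (x, v)))
    (DI : Q × Q → (Q × Q →L[ℝ] ℝ))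
    (hDI : ∀ z : Q × Q,
      HasFDerivAt (fun w : Q × Q => (⟪p w, A w.1⟫ : ℝ)) (DI z) z) :
    ∀ x v xa va : Q,
      ⟪Dp (x, v) (xa, va), A x⟫ - ⟪Dp (x, v) (A x, A v), xa⟫ = DI (x, v) (xa, va) := by
  intro x v xa va
  have hgen : Dp (x, v) (A x, A v) = A (p (x, v)) :=
    (hDp (x, v)).apply_generator_of_equivariant (hsym · x v)
  have hproduct : DI (x, v) (xa, va) = ⟪p (x, v), A xa⟫ + ⟪Dp (x, v) (xa, va), A x⟫ := by
    have hI := (hDp (x, v)).inner ℝ (A.hasFDerivAt.comp (x, v) hasFDerivAt_fst)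
    rw [(hDI (x, v)).unique hI]
    simp [fderivInnerCLM]
  rw [hproduct, hgen, inner_map_left_eq_neg_of_exp_smul_isometry hU]
  ring

/-- For a weak symmetry group `s ↦ exp(sA)` (each `exp(sA)` unitary, and the momentum `p`
commuting with the group), the infinitesimal generator `(Ax, Av)` of the lifted group is the
symplectic gradient of the Noether integral `I(x,v) = ⟪p(x,v), Ax⟫`:
`σ|_{(x,v)}((Ax,Av), ·) = DI|_{(x,v)}(·)`. -/
theorem symmetry_generator_is_symplectic_gradient_of_noether_integral
    {Q : Type*} [NormedAddCommGroup Q] [InnerProductSpace ℝ Q] [CompleteSpace Q]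
    (A : Q →L[ℝ] Q)
    (hU : ∀ (s : ℝ) (x y : Q),
      ⟪NormedSpace.exp (s • A) x, NormedSpace.exp (s • A) y⟫ = ⟪x, y⟫)
    (L : Q → Q → ℝ) (p : Q × Q → Q)
    (hp : ∀ x v : Q, HasFDerivAt (fun v' => L x v') (innerSL ℝ (p (x, v))) v)
    (Dp : Q × Q → (Q × Q →L[ℝ] Q))
    (hDp : ∀ z : Q × Q, HasFDerivAt p (Dp z) z)
    (hsym : ∀ (s : ℝ) (x v : Q),
      p (NormedSpace.exp (s • A) x, NormedSpace.exp (s • A) v)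
        = NormedSpace.exp (s • A) (p (x, v)))
    (DI : Q × Q → (Q × Q →L[ℝ] ℝ))
    (hDI : ∀ z : Q × Q,
      HasFDerivAt (fun w : Q × Q => (⟪p w, A w.1⟫ : ℝ)) (DI z) z) :
    ∀ x v xa va : Q,
      ⟪Dp (x, v) (xa, va), A x⟫ - ⟪Dp (x, v) (A x, A v), xa⟫ = DI (x, v) (xa, va) :=
  symmetry_generator_is_symplectic_gradient_of_noether_integral_general A hU L p Dp hDp hsym DI hDI
end

section
/- Let Q be a real Hilbert space and A : Q → Q a bounded linear operator such that T(s) := exp(sA) is unitary for every s ∈ ℝ. Let L : Q × Q → ℝ be such that v ↦ L(x,v) is Fréchet differentiable for each x, with momentum π, and assume L is invariant under the symmetry group: L(T(s)x, T(s)v) = L(x,v) for all s, x, v. Define the energy E(x,v) = ⟨π(x,v), v⟩ − L(x,v), the Noether integral I(x,v) = ⟨π(x,v), A x⟩, the map R̃(x,v) = (x, v − Ax), and for each t ∈ ℝ the inverse moving-frame lift M̃(t)(x,v) = (T(−t)x, T(−t)(v − Ax)). Then for every t ∈ ℝ: (i) L(M̃(t)(x,v)) = L(R̃(x,v)) for all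 (x,v) (so the transformed Lagrangian L̃ := L ∘ M̃(t) is independent of t and equals L ∘ R̃); (ii) E(M̃(t)(x,v)) = E(R̃(x,v)) and I(M̃(t)(x,v)) = I(R̃(x,v)); (iii) the Hamiltonian of L̃, namely H̃(x,v) = ⟨π̃(x,v), v⟩ − L̃(x,v) where π̃ is the momentum of L̃, satisfies H̃(x,v) = E(R̃(x,v)) + I(R̃(x,v)) for all (x,v); that is, in the moving frame the Hamiltonian equals the transform of the energy plus the transform of the Noether integral. -/
open scoped RealInnerProductSpace

/-- The one-parameter unitary group `T s = exp (s • A)` lifted to the tangent bundle. -/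
noncomputable def movingFrameGroup {Q : Type*} [NormedAddCommGroup Q] [NormedSpace ℝ Q]
    (A : Q →L[ℝ] Q) (s : ℝ) : Q →L[ℝ] Q :=
  NormedSpace.exp (s • A)

/-!
Invariance of `L` under `T s` makes `v ↦ L (T s x) (T s v)` and `v ↦ L x v` the same function, so
comparing their derivatives shows that the momentum is equivariant, `⟪p (T s x) (T s w), T s u⟫ =
⟪p x w, u⟫`. Since `T s` commutes with `A`, this gives the identities for the energy and the Noether
integral. For the Hamiltonian, invariance reduces `L̃ t x` to `v ↦ L x (v - A x)`, whose momentum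
at `v` is `p x (v - A x)`; pairing it with `v = (v - A x) + A x` splits `H̃` into `E ∘ R̃ + I ∘ R̃`.
-/

section Momentum

variable {E : Type*} [NormedAddCommGroup E] [InnerProductSpace ℝ E]

theorem HasFDerivAt.innerSL_unique {f : E → ℝ} {a b x : E}
    (ha : HasFDerivAt f (innerSL ℝ a) x) (hb : HasFDerivAt f (innerSL ℝ b) x) : a = b :=
  ext_inner_right ℝ fun u => by simpa using congr($(ha.unique hb) u)

theorem inner_momentum_map_of_invariant {L : E → E → ℝ} {p : E → E → E} {T : E →L[ℝ] E}
    (hT : ∀ x v, L (T x) (T v) = L x v)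
    (hp : ∀ x v, HasFDerivAt (fun v' => L x v') (innerSL ℝ (p x v)) v) (x w u : E) :
    ⟪p (T x) (T w), T u⟫ = ⟪p x w, u⟫ := by
  have hcomp := (hp (T x) (T w)).comp w T.hasFDerivAt
  simp only [Function.comp_def, hT] at hcomp
  simpa using congr($(hcomp.unique (hp x w)) u)

end Momentum

theorem commute_movingFrameGroup {Q : Type*} [NormedAddCommGroup Q] [NormedSpace ℝ Q]
    (A : Q →L[ℝ] Q) (s : ℝ) : Commute A (movingFrameGroup A s) :=
  ((Commute.refl A).smul_right s).exp_right

theorem moving_frame_hamiltonian_is_energy_plus_noether_integral_general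
    {Q : Type*} [NormedAddCommGroup Q] [InnerProductSpace ℝ Q]
    (A : Q →L[ℝ] Q)
    (L : Q → Q → ℝ)
    (hinv : ∀ (s : ℝ) (x v : Q),
      L (movingFrameGroup A s x) (movingFrameGroup A s v) = L x v)
    (p : Q → Q → Q)
    (hp : ∀ x v : Q, HasFDerivAt (fun v' => L x v') (innerSL ℝ (p x v)) v)
    (pt : ℝ → Q → Q → Q)
    (hpt : ∀ (t : ℝ) (x v : Q),
      HasFDerivAt
        (fun v' => L (movingFrameGroup A (-t) x) (movingFrameGroup A (-t) (v' - A x)))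
        (innerSL ℝ (pt t x v)) v) :
    ∀ (t : ℝ) (x v : Q),
      -- (i) the transformed Lagrangian is independent of `t` and equals `L ∘ R̃`
      (L (movingFrameGroup A (-t) x) (movingFrameGroup A (-t) (v - A x))
          = L x (v - A x)) ∧
      -- (ii) the transformed energy equals `E ∘ R̃` ...
      (⟪p (movingFrameGroup A (-t) x) (movingFrameGroup A (-t) (v - A x)),
            movingFrameGroup A (-t) (v - A x)⟫
          - L (movingFrameGroup A (-t) x) (movingFrameGroup A (-t) (v - A x))
        = ⟪p x (v - A x), v - A x⟫ - L x (v - A x)) ∧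
      -- ... and the transformed Noether integral equals `I ∘ R̃`
      (⟪p (movingFrameGroup A (-t) x) (movingFrameGroup A (-t) (v - A x)),
            A (movingFrameGroup A (-t) x)⟫
        = ⟪p x (v - A x), A x⟫) ∧
      -- (iii) the Hamiltonian of the transformed Lagrangian equals `E ∘ R̃ + I ∘ R̃`
      (⟪pt t x v, v⟫
          - L (movingFrameGroup A (-t) x) (movingFrameGroup A (-t) (v - A x))
        = (⟪p x (v - A x), v - A x⟫ - L x (v - A x)) + ⟪p x (v - A x), A x⟫) := by
  intro t x v
  have hL := hinv (-t) x (v - A x)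
  have hequiv := inner_momentum_map_of_invariant (hinv (-t)) hp x (v - A x)
  have hAT : A (movingFrameGroup A (-t) x) = movingFrameGroup A (-t) (A x) :=
    congr($((commute_movingFrameGroup A (-t)).eq) x)
  have hpt_eq : pt t x v = p x (v - A x) := by
    have hLt := hpt t x v
    simp only [hinv] at hLt
    have hshift : HasFDerivAt (fun v' : Q => v' - A x) (ContinuousLinearMap.id ℝ Q) v :=
      (hasFDerivAt_id v).sub_const (A x)
    exact hLt.innerSL_unique ((hp x (v - A x)).comp v hshift :)
  have hsplit : ⟪p x (v - A x), v⟫ = ⟪p x (v - A x), v - A x⟫ + ⟪p x (v - A x), A x⟫ := by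
    rw [← inner_add_right, sub_add_cancel]
  refine ⟨hL, by rw [hequiv, hL], by rw [hAT, hequiv], ?_⟩
  rw [hpt_eq, hL, hsplit]
  ring

/-- Moving-frame transformations:  let `T s = exp(sA)` be a unitary symmetry group of the
Lagrangian `L`, with momentum `p`, energy `E(x,v) = ⟪p x v, v⟫ − L x v`, Noether integral
`I(x,v) = ⟪p x v, Ax⟫`, `R̃(x,v) = (x, v − Ax)` and inverse moving-frame lift
`M̃ t (x,v) = (T(−t)x, T(−t)(v − Ax))`.  Then `L ∘ M̃ t = L ∘ R̃`, `E ∘ M̃ t = E ∘ R̃`,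
`I ∘ M̃ t = I ∘ R̃`, and the Hamiltonian of the transformed Lagrangian `L̃ = L ∘ M̃ t`
equals `E ∘ R̃ + I ∘ R̃`. -/
theorem moving_frame_hamiltonian_is_energy_plus_noether_integral
    {Q : Type*} [NormedAddCommGroup Q] [InnerProductSpace ℝ Q] [CompleteSpace Q]
    (A : Q →L[ℝ] Q)
    (hU : ∀ (s : ℝ) (x y : Q),
      ⟪movingFrameGroup A s x, movingFrameGroup A s y⟫ = ⟪x, y⟫)
    (L : Q → Q → ℝ)
    (hinv : ∀ (s : ℝ) (x v : Q),
      L (movingFrameGroup A s x) (movingFrameGroup A s v) = L x v)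
    (p : Q → Q → Q)
    (hp : ∀ x v : Q, HasFDerivAt (fun v' => L x v') (innerSL ℝ (p x v)) v)
    (pt : ℝ → Q → Q → Q)
    (hpt : ∀ (t : ℝ) (x v : Q),
      HasFDerivAt
        (fun v' => L (movingFrameGroup A (-t) x) (movingFrameGroup A (-t) (v' - A x)))
        (innerSL ℝ (pt t x v)) v) :
    ∀ (t : ℝ) (x v : Q),
      -- (i) the transformed Lagrangian is independent of `t` and equals `L ∘ R̃`
      (L (movingFrameGroup A (-t) x) (movingFrameGroup A (-t) (v - A x))
          = L x (v - A x)) ∧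
      -- (ii) the transformed energy equals `E ∘ R̃` ...
      (⟪p (movingFrameGroup A (-t) x) (movingFrameGroup A (-t) (v - A x)),
            movingFrameGroup A (-t) (v - A x)⟫
          - L (movingFrameGroup A (-t) x) (movingFrameGroup A (-t) (v - A x))
        = ⟪p x (v - A x), v - A x⟫ - L x (v - A x)) ∧
      -- ... and the transformed Noether integral equals `I ∘ R̃`
      (⟪p (movingFrameGroup A (-t) x) (movingFrameGroup A (-t) (v - A x)),
            A (movingFrameGroup A (-t) x)⟫
        = ⟪p x (v - A x), A x⟫) ∧
      -- (iii) the Hamiltonian of the transformed Lagrangian equals `E ∘ R̃ + I ∘ R̃`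
      (⟪pt t x v, v⟫
          - L (movingFrameGroup A (-t) x) (movingFrameGroup A (-t) (v - A x))
        = (⟪p x (v - A x), v - A x⟫ - L x (v - A x)) + ⟪p x (v - A x), A x⟫) :=
  moving_frame_hamiltonian_is_energy_plus_noether_integral_general A L hinv p hp pt hpt
end

section
/- Let Q and P be real Hilbert spaces, ε > 0, μ ∈ ℝ, λ > 0, and let S : Q → P be a linear bijection satisfying ⟨x, x̃⟩_Q = ε^μ ⟨Sx, Sx̃⟩_P for all x, x̃ ∈ Q (a scaling transformation). Let L : Q × Q → ℝ be such that v ↦ L(x,v) is Fréchet differentiable for each x, with momentum π and Hamiltonian H(x,v) = ⟨π(x,v), v⟩_Q − L(x,v), and assume π is Fréchet differentiable with associated symplectic form σ. Define the inverse lifted scaling 𝕊(X,V) = (S⁻¹X, λ S⁻¹V) on P × P and the macroscopic Lagrangian 𝕃 = L ∘ 𝕊 with momentum Π (computed with the P-inner product) and Hamiltonian ℍ(X,V) = ⟨Π(X,V), V⟩_P − 𝕃(X,V), and let 𝛔 be the symplectic form associated with Π. Then for all (X,V) ∈ P × P: (i) Π(X,V) = λ ε^μ S(π(𝕊(X,V)));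 (ii) ℍ(X,V) = H(𝕊(X,V)); and (iii) for all tangent vectors Ż, Ź ∈ P × P, 𝛔|_{(X,V)}(Ż, Ź) = λ · σ|_{𝕊(X,V)}(𝕊Ż, 𝕊Ź), where 𝕊 acts componentwise on tangent vectors; i.e. the macroscopic symplectic form is λ times the pullback of σ under 𝕊. -/
/-!
The scaling identity `⟪x, S⁻¹w⟫ = ε^μ ⟪Sx, w⟫` says that the adjoint of `lam • S⁻¹` is
`(lam ε^μ) • S`. By the chain rule the gradient of `V ↦ L(X', lam S⁻¹V)` is this adjoint applied
to `π ∘ 𝕊`, which gives the momentum formula. The Hamiltonian and symplectic identities follow by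
moving `(lam ε^μ) • S` back across the inner product, the latter after differentiating
`Π = (lam ε^μ) • S ∘ π ∘ 𝕊` once more.
-/

open scoped RealInnerProductSpace

section

variable {Q P : Type*} [NormedAddCommGroup Q] [InnerProductSpace ℝ Q]
  [NormedAddCommGroup P] [InnerProductSpace ℝ P]

def invLiftedScaling (S : Q ≃L[ℝ] P) (lam : ℝ) : P × P →L[ℝ] Q × Q :=
  ((S.symm : P →L[ℝ] Q).comp (.fst ℝ P P)).prod
    ((lam • (S.symm : P →L[ℝ] Q)).comp (.snd ℝ P P))

@[simp]
theorem invLiftedScaling_apply (S : Q ≃L[ℝ] P) (lam : ℝ) (Z : P × P) :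
    invLiftedScaling S lam Z = (S.symm Z.1, lam • S.symm Z.2) :=
  rfl

def symplecticForm {E : Type*} [NormedAddCommGroup E] [InnerProductSpace ℝ E]
    (Dπ : E × E →L[ℝ] E) (ż ź : E × E) : ℝ :=
  ⟪Dπ ź, ż.1⟫ - ⟪Dπ ż, ź.1⟫

theorem inner_eq_inner_comp_of_hasFDerivAt {f : Q → ℝ} {A : P →L[ℝ] Q} {g : Q} {G V : P}
    (hf : HasFDerivAt f (innerSL ℝ g) (A V)) (hfA : HasFDerivAt (f ∘ A) (innerSL ℝ G) V)
    (w : P) : ⟪G, w⟫ = ⟪g, A w⟫ := by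
  simpa using congrArg (· w) (hfA.unique (hf.comp V A.hasFDerivAt))

section Scaling

variable {c : ℝ} {S : Q ≃L[ℝ] P} (hS : ∀ x y : Q, ⟪x, y⟫ = c * ⟪S x, S y⟫)
include hS

theorem inner_smul_scaling_eq_inner_smul_symm (lam : ℝ) (x : Q) (w : P) :
    ⟪(lam * c) • S x, w⟫ = ⟪x, lam • S.symm w⟫ := by
  rw [real_inner_smul_left, real_inner_smul_right, hS x (S.symm w), S.apply_symm_apply]
  ring

theorem gradient_eq_of_comp_smul_symm {lam : ℝ} {f : Q → ℝ} {g : Q} {G V : P}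
    (hf : HasFDerivAt f (innerSL ℝ g) (lam • S.symm V))
    (hG : HasFDerivAt (fun V' => f (lam • S.symm V')) (innerSL ℝ G) V) :
    G = (lam * c) • S g :=
  ext_inner_right ℝ fun w => by
    rw [inner_smul_scaling_eq_inner_smul_symm hS]
    exact inner_eq_inner_comp_of_hasFDerivAt (A := lam • (S.symm : P →L[ℝ] Q)) hf hG w

theorem symplecticForm_scaling_comp (lam : ℝ) (Dπ : Q × Q →L[ℝ] Q) (ż ź : P × P) :
    symplecticForm (((lam * c) • (S : Q →L[ℝ] P)).comp (Dπ.comp (invLiftedScaling S lam))) ż ź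
      = lam * symplecticForm Dπ (invLiftedScaling S lam ż) (invLiftedScaling S lam ź) := by
  simp only [symplecticForm, ContinuousLinearMap.comp_apply, smul_apply,
    ContinuousLinearEquiv.coe_coe, invLiftedScaling_apply,
    inner_smul_scaling_eq_inner_smul_symm hS, real_inner_smul_right]
  ring

end Scaling

end

theorem scaling_transformation_of_hamiltonian_structure_general
    {Q P : Type*} [NormedAddCommGroup Q] [InnerProductSpace ℝ Q]
    [NormedAddCommGroup P] [InnerProductSpace ℝ P]
    (ε μ lam : ℝ)
    (S : Q ≃L[ℝ] P)
    (hS : ∀ x y : Q, ⟪x, y⟫ = ε ^ μ * ⟪S x, S y⟫)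
    (L : Q × Q → ℝ) (p : Q × Q → Q)
    (hp : ∀ x v : Q, HasFDerivAt (fun v' => L (x, v')) (innerSL ℝ (p (x, v))) v)
    (Dp : Q × Q → (Q × Q →L[ℝ] Q))
    (hDp : ∀ z : Q × Q, HasFDerivAt p (Dp z) z)
    (Pi : P × P → P)
    (hPi : ∀ X V : P,
      HasFDerivAt (fun V' => L (S.symm X, lam • S.symm V')) (innerSL ℝ (Pi (X, V))) V)
    (DPi : P × P → (P × P →L[ℝ] P))
    (hDPi : ∀ Z : P × P, HasFDerivAt Pi (DPi Z) Z) :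
    ∀ X V : P,
      -- (i) the macroscopic momentum
      Pi (X, V) = (lam * ε ^ μ) • S (p (S.symm X, lam • S.symm V)) ∧
      -- (ii) the macroscopic Hamiltonian equals the transformed Hamiltonian
      (⟪Pi (X, V), V⟫ - L (S.symm X, lam • S.symm V)
        = ⟪p (S.symm X, lam • S.symm V), lam • S.symm V⟫
          - L (S.symm X, lam • S.symm V)) ∧
      -- (iii) the macroscopic symplectic form is `lam` times the pullback of `σ` under `𝕊`
      (∀ Zd Za : P × P,
        ⟪DPi (X, V) Za, Zd.1⟫ - ⟪DPi (X, V) Zd, Za.1⟫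
          = lam *
            (⟪Dp (S.symm X, lam • S.symm V) (S.symm Za.1, lam • S.symm Za.2), S.symm Zd.1⟫
              - ⟪Dp (S.symm X, lam • S.symm V) (S.symm Zd.1, lam • S.symm Zd.2),
                  S.symm Za.1⟫)) := by
  set T := invLiftedScaling S lam
  have momentum (X V : P) : Pi (X, V) = (lam * ε ^ μ) • S (p (S.symm X, lam • S.symm V)) :=
    gradient_eq_of_comp_smul_symm hS (hp _ _) (hPi X V)
  have momentum_fun : Pi = fun Z => (lam * ε ^ μ) • S (p (T Z)) :=
    funext fun Z => momentum Z.1 Z.2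
  intro X V
  refine ⟨momentum X V, by rw [momentum, inner_smul_scaling_eq_inner_smul_symm hS],
    fun Zd Za => ?_⟩
  have derivative :
      DPi (X, V) = ((lam * ε ^ μ) • (S : Q →L[ℝ] P)).comp ((Dp (T (X, V))).comp T) := by
    refine (hDPi (X, V)).unique ?_
    rw [momentum_fun]
    exact ((lam * ε ^ μ) • (S : Q →L[ℝ] P)).hasFDerivAt.comp _ ((hDp _).comp _ T.hasFDerivAt)
  rw [derivative]
  exact symplecticForm_scaling_comp hS lam _ Zd Za

/-- Transformation of the Lagrangian and Hamiltonian structures under a scaling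
transformation.  Let `S : Q → P` be a linear bijection with `⟪x,x̃⟫_Q = ε^μ ⟪Sx,Sx̃⟫_P`,
and let `𝕊(X,V) = (S⁻¹X, lam • S⁻¹V)` be the inverse lifted scaling (with time-scaling
factor `lam = dτ/dt`).  If `p` is the momentum of `L`, `Dp` its derivative, `Pi` the
momentum of the macroscopic Lagrangian `𝕃 = L ∘ 𝕊` and `DPi` its derivative, then
`Pi = (lam ε^μ) • S ∘ p ∘ 𝕊`, the macroscopic Hamiltonian equals `H ∘ 𝕊`, and the
macroscopic symplectic form is `lam` times the pullback of `σ` under `𝕊`. -/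
theorem scaling_transformation_of_hamiltonian_structure
    {Q P : Type*} [NormedAddCommGroup Q] [InnerProductSpace ℝ Q] [CompleteSpace Q]
    [NormedAddCommGroup P] [InnerProductSpace ℝ P] [CompleteSpace P]
    (ε μ lam : ℝ) (hε : 0 < ε) (hlam : 0 < lam)
    (S : Q ≃L[ℝ] P)
    (hS : ∀ x y : Q, ⟪x, y⟫ = ε ^ μ * ⟪S x, S y⟫)
    (L : Q × Q → ℝ) (p : Q × Q → Q)
    (hp : ∀ x v : Q, HasFDerivAt (fun v' => L (x, v')) (innerSL ℝ (p (x, v))) v)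
    (Dp : Q × Q → (Q × Q →L[ℝ] Q))
    (hDp : ∀ z : Q × Q, HasFDerivAt p (Dp z) z)
    (Pi : P × P → P)
    (hPi : ∀ X V : P,
      HasFDerivAt (fun V' => L (S.symm X, lam • S.symm V')) (innerSL ℝ (Pi (X, V))) V)
    (DPi : P × P → (P × P →L[ℝ] P))
    (hDPi : ∀ Z : P × P, HasFDerivAt Pi (DPi Z) Z) :
    ∀ X V : P,
      -- (i) the macroscopic momentum
      Pi (X, V) = (lam * ε ^ μ) • S (p (S.symm X, lam • S.symm V)) ∧
      -- (ii) the macroscopic Hamiltonian equals the transformed Hamiltonian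
      (⟪Pi (X, V), V⟫ - L (S.symm X, lam • S.symm V)
        = ⟪p (S.symm X, lam • S.symm V), lam • S.symm V⟫
          - L (S.symm X, lam • S.symm V)) ∧
      -- (iii) the macroscopic symplectic form is `lam` times the pullback of `σ` under `𝕊`
      (∀ Zd Za : P × P,
        ⟪DPi (X, V) Za, Zd.1⟫ - ⟪DPi (X, V) Zd, Za.1⟫
          = lam *
            (⟪Dp (S.symm X, lam • S.symm V) (S.symm Za.1, lam • S.symm Za.2), S.symm Zd.1⟫
              - ⟪Dp (S.symm X, lam • S.symm V) (S.symm Zd.1, lam • S.symm Zd.2),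
                  S.symm Za.1⟫)) :=
  scaling_transformation_of_hamiltonian_structure_general ε μ lam S hS L p hp Dp hDp Pi hPi DPi hDPi
end

section
/- Let Φ₀ : ℝ → ℝ be smooth with Φ₀(0) = Φ₀'(0) = 0, set v₂ = Φ₀''(0), v₃ = Φ₀'''(0), v₄ = Φ₀''''(0), and let θ ∈ ℝ. Let X : ℝ × ℝ → ℝ be smooth, 2π-periodic in its second argument φ, and compactly supported in its first argument y. For ε > 0 define 𝕍(ε) = ε^{-1} ∫_ℝ ∫_0^{2π} [ −(ε²/2) X(y,φ) ( X(y+ε, φ+θ) + X(y−ε, φ−θ) − 2X(y,φ) ) + Φ₀(ε X(y,φ)) ] dφ dy. Then there exist C > 0 and ε₀ > 0 such that for all 0 < ε < ε₀: | 𝕍(ε) − ε𝕍₀ − ε²𝕍₁ − ε³𝕍₂ | ≤ C ε⁴, where 𝕍₀ = ∫∫ [ −½ X(y,φ)( X(y,φ+θ) + X(y,φ−θ) − 2X(y,φ) ) + (v₂/2) X(y,φ)² ] dφ dy, 𝕍₁ = ∫∫ [ −½ X(y,φ)( ∂_yX(y,φ+θ) − ∂_yX(y,φ−θ) ) + (v₃/6)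 X(y,φ)³ ] dφ dy, and 𝕍₂ = ∫∫ [ −¼ X(y,φ)( ∂_{yy}X(y,φ+θ) + ∂_{yy}X(y,φ−θ) ) + (v₄/24) X(y,φ)⁴ ] dφ dy. -/
/-- Directional partial derivative of a function on `ℝ²` in the direction `d`. -/
noncomputable def pd (d : ℝ × ℝ) (f : ℝ × ℝ → ℝ) (p : ℝ × ℝ) : ℝ :=
  fderiv ℝ f p d

/-!
Pointwise in `(y, φ)`, expand `X (y ± ε, φ ± θ)` in `y` to second order and `Φ₀` at `0` to
fourth order. The terms of order `ε, ε², ε³` of `ε⁻¹` times the density of `𝕍(ε)` are exactly the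
densities of `𝕍₀, 𝕍₁, 𝕍₂`, and what is left is made of Lagrange remainders, of size `O(ε⁴)`
uniformly on the strip `|y| ≤ R`, `0 ≤ φ ≤ 2π`, since `∂_y³ X` and `Φ₀⁽⁵⁾` are bounded on compact
sets. Outside the strip every density vanishes, so integrating over it gives the claim.
-/

open Set MeasureTheory

theorem abs_sub_sum_iteratedDeriv_le {f : ℝ → ℝ} {n : ℕ} (hf : ContDiff ℝ (n + 1) f)
    {x₀ x M : ℝ} (hM : ∀ s ∈ uIcc x₀ x, |iteratedDeriv (n + 1) f s| ≤ M) :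
    |f x - ∑ k ∈ Finset.range (n + 1), iteratedDeriv k f x₀ * (x - x₀) ^ k / k.factorial|
      ≤ M * |x - x₀| ^ (n + 1) / (n + 1).factorial := by
  rcases eq_or_ne x₀ x with rfl | hx
  · rw [Finset.sum_range_succ']
    simp
  obtain ⟨ξ, hξ, hrem⟩ := taylor_mean_remainder_lagrange_iteratedDeriv hx hf.contDiffOn
  have hu : UniqueDiffOn ℝ (uIcc x₀ x) := uniqueDiffOn_uIcc hx
  have htaylor : taylorWithinEval f n (uIcc x₀ x) x₀ x
      = ∑ k ∈ Finset.range (n + 1), iteratedDeriv k f x₀ * (x - x₀) ^ k / k.factorial := by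
    rw [taylor_within_apply]
    refine Finset.sum_congr rfl fun k hk => ?_
    rw [iteratedDerivWithin_eq_iteratedDeriv hu
      ((hf.of_le (by exact_mod_cast (Finset.mem_range.mp hk).le)).contDiffAt) left_mem_uIcc,
      smul_eq_mul]
    ring
  rw [← htaylor, hrem, abs_div, abs_mul, abs_pow, Nat.abs_cast]
  gcongr
  exact hM ξ (uIoo_subset_uIcc_self hξ)

theorem contDiff_pd {n : WithTop ℕ∞} {F : ℝ × ℝ → ℝ} (hF : ContDiff ℝ (n + 1) F) (d : ℝ × ℝ) :
    ContDiff ℝ n (pd d F) :=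
  (hF.fderiv_right le_rfl).clm_apply contDiff_const

theorem deriv_comp_prodMk_const {F : ℝ × ℝ → ℝ} (hF : Differentiable ℝ F) (ψ : ℝ) :
    deriv (fun t => F (t, ψ)) = fun t => pd (1, 0) F (t, ψ) := by
  funext t
  have hline : HasDerivAt (fun t : ℝ => (t, ψ)) ((1, 0) : ℝ × ℝ) t :=
    (hasDerivAt_id t).prodMk (hasDerivAt_const t ψ)
  exact ((hF (t, ψ)).hasFDerivAt.comp_hasDerivAt t hline).deriv

theorem iteratedDeriv_comp_prodMk_const {k : ℕ} {F : ℝ × ℝ → ℝ} (hF : ContDiff ℝ k F) (ψ : ℝ) :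
    iteratedDeriv k (fun t => F (t, ψ)) = fun t => (pd (1, 0))^[k] F (t, ψ) := by
  induction k generalizing F with
  | zero => rfl
  | succ k ih =>
    rw [iteratedDeriv_succ', deriv_comp_prodMk_const (hF.differentiable (by simp)),
      ih (contDiff_pd hF _)]
    rfl

theorem continuous_iterate_pd {k : ℕ} {F : ℝ × ℝ → ℝ} (hF : ContDiff ℝ k F)
    (d : ℝ × ℝ) : Continuous ((pd d)^[k] F) := by
  induction k generalizing F with
  | zero => exact hF.continuous
  | succ k ih => exact ih (contDiff_pd hF d)

noncomputable def shiftRemainder (F : ℝ × ℝ → ℝ) (y h ψ : ℝ) : ℝ :=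
  F (y + h, ψ) - (F (y, ψ) + h * pd (1, 0) F (y, ψ) + h ^ 2 / 2 * pd (1, 0) (pd (1, 0) F) (y, ψ))

theorem abs_shiftRemainder_le {F : ℝ × ℝ → ℝ} (hF : ContDiff ℝ 3 F)
    {y h ψ M : ℝ} (hM : ∀ s ∈ uIcc y (y + h), |(pd (1, 0))^[3] F (s, ψ)| ≤ M) :
    |shiftRemainder F y h ψ| ≤ M * |h| ^ 3 / 6 := by
  have hslice : ContDiff ℝ 3 fun t => F (t, ψ) := hF.comp (contDiff_id.prodMk contDiff_const)
  have key := abs_sub_sum_iteratedDeriv_le (n := 2) hslice (x₀ := y) (x := y + h)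
    (by rwa [iteratedDeriv_comp_prodMk_const hF])
  simp only [Finset.sum_range_succ, Finset.sum_range_zero,
    iteratedDeriv_comp_prodMk_const (hF.of_le (by norm_num) : ContDiff ℝ 0 F),
    iteratedDeriv_comp_prodMk_const (hF.of_le (by norm_num) : ContDiff ℝ 1 F),
    iteratedDeriv_comp_prodMk_const (hF.of_le (by norm_num) : ContDiff ℝ 2 F)] at key
  convert key using 3 <;> simp [shiftRemainder, Function.iterate_succ_apply] <;> ring

noncomputable def quarticRemainder (Φ : ℝ → ℝ) (u : ℝ) : ℝ :=
  Φ u - (iteratedDeriv 2 Φ 0 / 2 * u ^ 2 + iteratedDeriv 3 Φ 0 / 6 * u ^ 3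
    + iteratedDeriv 4 Φ 0 / 24 * u ^ 4)

theorem abs_quarticRemainder_le {Φ : ℝ → ℝ} (hΦ : ContDiff ℝ 5 Φ) (h0 : Φ 0 = 0)
    (h1 : deriv Φ 0 = 0) {u M : ℝ} (hM : ∀ s ∈ uIcc 0 u, |iteratedDeriv 5 Φ s| ≤ M) :
    |quarticRemainder Φ u| ≤ M * |u| ^ 5 / 120 := by
  have key := abs_sub_sum_iteratedDeriv_le (n := 4) hΦ hM
  simp only [Finset.sum_range_succ, Finset.sum_range_zero, iteratedDeriv_zero,
    iteratedDeriv_one, h0, h1, sub_zero] at key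
  convert key using 3 <;> simp [quarticRemainder, Nat.factorial]
  ring

section IteratedIntegral

variable {a b R : ℝ} {f g : ℝ → ℝ → ℝ}

theorem integrable_intervalIntegral_of_eq_zero (hf : Continuous (Function.uncurry f))
    (hfR : ∀ y φ, R < |y| → f y φ = 0) : Integrable fun y => ∫ φ in a..b, f y φ := by
  refine (intervalIntegral.continuous_parametric_intervalIntegral_of_continuous' hf a b)
    |>.integrable_of_hasCompactSupport
      (HasCompactSupport.intro (isCompact_Icc (a := -R) (b := R)) fun y hy => ?_)
  have hfy : f y = 0 := funext fun φ => hfR y φ (lt_of_not_ge fun h => hy (abs_le.mp h))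
  simp [hfy]

theorem integral_intervalIntegral_sub (hf : Continuous (Function.uncurry f))
    (hfR : ∀ y φ, R < |y| → f y φ = 0) (hg : Continuous (Function.uncurry g))
    (hgR : ∀ y φ, R < |y| → g y φ = 0) :
    ∫ y, ∫ φ in a..b, (f y φ - g y φ)
      = (∫ y, ∫ φ in a..b, f y φ) - ∫ y, ∫ φ in a..b, g y φ := by
  have hslice {h : ℝ → ℝ → ℝ} (hh : Continuous (Function.uncurry h)) (y : ℝ) :
      IntervalIntegrable (h y) volume a b :=
    (hh.comp (continuous_const.prodMk continuous_id)).intervalIntegrable a b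
  simp_rw [intervalIntegral.integral_sub (hslice hf _) (hslice hg _)]
  exact integral_sub (integrable_intervalIntegral_of_eq_zero hf hfR)
    (integrable_intervalIntegral_of_eq_zero hg hgR)

theorem abs_integral_intervalIntegral_le (hR : 0 ≤ R) (hfR : ∀ y φ, R < |y| → f y φ = 0)
    {B : ℝ} (hB : ∀ y ∈ Icc (-R) R, ∀ φ ∈ uIoc a b, |f y φ| ≤ B) :
    |∫ y, ∫ φ in a..b, f y φ| ≤ B * |b - a| * (2 * R) := by
  have hout : ∀ y ∉ Icc (-R) R, ∫ φ in a..b, f y φ = 0 := fun y hy => by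
    have hfy : f y = 0 := funext fun φ => hfR y φ (lt_of_not_ge fun h => hy (abs_le.mp h))
    simp [hfy]
  rw [← setIntegral_eq_integral_of_forall_compl_eq_zero hout]
  have key := norm_setIntegral_le_of_norm_le_const (μ := volume) measure_Icc_lt_top fun y hy =>
    intervalIntegral.norm_integral_le_of_norm_le_const (f := f y) (hB y hy)
  rwa [Real.volume_real_Icc_of_le (by linarith), sub_neg_eq_add, ← two_mul] at key

end IteratedIntegral

noncomputable section Density

variable (Φ₀ : ℝ → ℝ) (X : ℝ × ℝ → ℝ) (v₂ v₃ v₄ θ : ℝ)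

def potentialDensity (ε y φ : ℝ) : ℝ :=
  -(ε ^ 2 / 2) * X (y, φ) * (X (y + ε, φ + θ) + X (y - ε, φ - θ) - 2 * X (y, φ))
    + Φ₀ (ε * X (y, φ))

def potentialDensity₀ (y φ : ℝ) : ℝ :=
  -(1 / 2) * X (y, φ) * (X (y, φ + θ) + X (y, φ - θ) - 2 * X (y, φ)) + (v₂ / 2) * X (y, φ) ^ 2

def potentialDensity₁ (y φ : ℝ) : ℝ :=
  -(1 / 2) * X (y, φ) * (pd (1, 0) X (y, φ + θ) - pd (1, 0) X (y, φ - θ))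
    + (v₃ / 6) * X (y, φ) ^ 3

def potentialDensity₂ (y φ : ℝ) : ℝ :=
  -(1 / 4) * X (y, φ) * (pd (1, 0) (pd (1, 0) X) (y, φ + θ) + pd (1, 0) (pd (1, 0) X) (y, φ - θ))
    + (v₄ / 24) * X (y, φ) ^ 4

def potentialDensityRemainder (ε y φ : ℝ) : ℝ :=
  ε⁻¹ * potentialDensity Φ₀ X θ ε y φ - ε * potentialDensity₀ X v₂ θ y φ
    - ε ^ 2 * potentialDensity₁ X v₃ θ y φ - ε ^ 3 * potentialDensity₂ X v₄ θ y φ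

variable {Φ₀ X v₂ v₃ v₄ θ}

theorem potentialDensityRemainder_eq_zero (hΦ₀0 : Φ₀ 0 = 0) {y φ : ℝ} (h : X (y, φ) = 0)
    (ε : ℝ) : potentialDensityRemainder Φ₀ X v₂ v₃ v₄ θ ε y φ = 0 := by
  simp [potentialDensityRemainder, potentialDensity, potentialDensity₀, potentialDensity₁,
    potentialDensity₂, h, hΦ₀0]

theorem potentialDensityRemainder_eq {ε : ℝ} (hε : ε ≠ 0) (y φ : ℝ) :
    potentialDensityRemainder Φ₀ X (iteratedDeriv 2 Φ₀ 0) (iteratedDeriv 3 Φ₀ 0)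
        (iteratedDeriv 4 Φ₀ 0) θ ε y φ
      = -(ε / 2) * X (y, φ) * (shiftRemainder X y ε (φ + θ) + shiftRemainder X y (-ε) (φ - θ))
        + ε⁻¹ * quarticRemainder Φ₀ (ε * X (y, φ)) := by
  simp only [potentialDensityRemainder, potentialDensity, potentialDensity₀, potentialDensity₁,
    potentialDensity₂, shiftRemainder, quarticRemainder, ← sub_eq_add_neg]
  field_simp
  ring

theorem abs_potentialDensityRemainder_le (hΦ₀ : ContDiff ℝ 5 Φ₀) (hΦ₀0 : Φ₀ 0 = 0)
    (hΦ₀1 : deriv Φ₀ 0 = 0) (hX : ContDiff ℝ 3 X) {ε y φ B₀ B₃ B₅ : ℝ} (hε : 0 < ε)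
    (hX0 : |X (y, φ)| ≤ B₀)
    (hX3 : ∀ s ∈ Icc (y - ε) (y + ε), ∀ ψ ∈ ({φ + θ, φ - θ} : Set ℝ),
      |(pd (1, 0))^[3] X (s, ψ)| ≤ B₃)
    (hΦ5 : ∀ u, |u| ≤ ε * B₀ → |iteratedDeriv 5 Φ₀ u| ≤ B₅) :
    |potentialDensityRemainder Φ₀ X (iteratedDeriv 2 Φ₀ 0) (iteratedDeriv 3 Φ₀ 0)
        (iteratedDeriv 4 Φ₀ 0) θ ε y φ| ≤ (B₀ * B₃ / 6 + B₀ ^ 5 * B₅ / 120) * ε ^ 4 := by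
  have hB₀ : 0 ≤ B₀ := (abs_nonneg _).trans hX0
  have hB₃ : 0 ≤ B₃ := (abs_nonneg _).trans (hX3 y ⟨by linarith, by linarith⟩ (φ + θ) (by simp))
  have hB₅ : 0 ≤ B₅ := (abs_nonneg _).trans (hΦ5 0 (by rw [abs_zero]; positivity))
  have hplus : |shiftRemainder X y ε (φ + θ)| ≤ B₃ * ε ^ 3 / 6 := by
    simpa [abs_of_pos hε] using abs_shiftRemainder_le hX (y := y) (h := ε) fun s hs => hX3 s
      (by rw [uIcc_of_le (by linarith)] at hs; exact ⟨by linarith [hs.1], hs.2⟩) (φ + θ) (by simp)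
  have hminus : |shiftRemainder X y (-ε) (φ - θ)| ≤ B₃ * ε ^ 3 / 6 := by
    simpa [abs_of_pos hε] using abs_shiftRemainder_le hX (y := y) (h := -ε) fun s hs => hX3 s
      (by rw [uIcc_of_ge (by linarith)] at hs; exact ⟨by linarith [hs.1], by linarith [hs.2]⟩)
      (φ - θ) (by simp)
  have hεX : |ε * X (y, φ)| ≤ ε * B₀ := by
    rw [abs_mul, abs_of_pos hε]; exact mul_le_mul_of_nonneg_left hX0 hε.le
  have hΦ := abs_quarticRemainder_le hΦ₀ hΦ₀0 hΦ₀1 (u := ε * X (y, φ)) (M := B₅) fun s hs =>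
    hΦ5 s (le_trans (by simpa using abs_sub_left_of_mem_uIcc hs) hεX)
  rw [potentialDensityRemainder_eq hε.ne']
  calc _ ≤ ε / 2 * |X (y, φ)| * (|shiftRemainder X y ε (φ + θ)|
          + |shiftRemainder X y (-ε) (φ - θ)|) + ε⁻¹ * |quarticRemainder Φ₀ (ε * X (y, φ))| := by
        refine (abs_add_le _ _).trans (add_le_add ?_ ?_)
        · rw [abs_mul, abs_mul, abs_neg, abs_of_pos (half_pos hε)]
          gcongr
          exact abs_add_le _ _
        · rw [abs_mul, abs_inv, abs_of_pos hε]
    _ ≤ ε / 2 * B₀ * (B₃ * ε ^ 3 / 6 + B₃ * ε ^ 3 / 6) + ε⁻¹ * (B₅ * (ε * B₀) ^ 5 / 120) := by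
        gcongr
        exact hΦ.trans (by gcongr)
    _ = (B₀ * B₃ / 6 + B₀ ^ 5 * B₅ / 120) * ε ^ 4 := by
        field_simp
        ring

theorem exists_abs_potentialDensityRemainder_le (hΦ₀ : ContDiff ℝ 5 Φ₀) (hΦ₀0 : Φ₀ 0 = 0)
    (hΦ₀1 : deriv Φ₀ 0 = 0) (hX : ContDiff ℝ 3 X) (R a b : ℝ) :
    ∃ K, ∀ ε ∈ Ioc (0 : ℝ) 1, ∀ y ∈ Icc (-R) R, ∀ φ ∈ Icc a b,
      |potentialDensityRemainder Φ₀ X (iteratedDeriv 2 Φ₀ 0) (iteratedDeriv 3 Φ₀ 0)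
        (iteratedDeriv 4 Φ₀ 0) θ ε y φ| ≤ K * ε ^ 4 := by
  set S := Icc (-R - 1) (R + 1) ×ˢ Icc (a - |θ|) (b + |θ|)
  have hS : IsCompact S := isCompact_Icc.prod isCompact_Icc
  obtain ⟨B₀, hB₀⟩ := hS.exists_bound_of_continuousOn hX.continuous.continuousOn
  obtain ⟨B₃, hB₃⟩ :=
    hS.exists_bound_of_continuousOn (continuous_iterate_pd hX (1, 0)).continuousOn
  obtain ⟨B₅, hB₅⟩ := (isCompact_Icc (a := -B₀) (b := B₀)).exists_bound_of_continuousOn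
    (hΦ₀.continuous_iteratedDeriv' 5).continuousOn
  simp only [Real.norm_eq_abs] at hB₀ hB₃ hB₅
  refine ⟨B₀ * B₃ / 6 + B₀ ^ 5 * B₅ / 120, fun ε hε y hy φ hφ => ?_⟩
  have hS_mem : ∀ s ψ, |s - y| ≤ 1 → |ψ - φ| ≤ |θ| → (s, ψ) ∈ S := fun s ψ hs hψ => by
    rw [abs_le] at hs hψ
    exact ⟨⟨by linarith [hy.1], by linarith [hy.2]⟩, ⟨by linarith [hφ.1], by linarith [hφ.2]⟩⟩
  have hX0 : |X (y, φ)| ≤ B₀ := hB₀ _ (hS_mem y φ (by simp) (by simp))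
  refine abs_potentialDensityRemainder_le hΦ₀ hΦ₀0 hΦ₀1 hX hε.1 hX0 ?_ fun u hu => ?_
  · rintro s hs ψ (rfl | rfl)
    all_goals refine hB₃ _ (hS_mem _ _ (abs_le.mpr ⟨?_, ?_⟩) (by simp))
    all_goals linarith [hs.1, hs.2, hε.2]
  · have hB₀_nonneg : 0 ≤ B₀ := (abs_nonneg _).trans hX0
    exact hB₅ u (abs_le.mp (hu.trans (mul_le_of_le_one_left hB₀_nonneg hε.2)))

theorem integral_intervalIntegral_potentialDensityRemainder (hΦ₀ : Continuous Φ₀)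
    (hΦ₀0 : Φ₀ 0 = 0) (hX : ContDiff ℝ 2 X) {R : ℝ} (hXR : ∀ y φ, R < |y| → X (y, φ) = 0)
    (ε a b : ℝ) :
    ∫ y, ∫ φ in a..b, potentialDensityRemainder Φ₀ X v₂ v₃ v₄ θ ε y φ
      = ε⁻¹ * (∫ y, ∫ φ in a..b, potentialDensity Φ₀ X θ ε y φ)
        - ε * (∫ y, ∫ φ in a..b, potentialDensity₀ X v₂ θ y φ)
        - ε ^ 2 * (∫ y, ∫ φ in a..b, potentialDensity₁ X v₃ θ y φ)
        - ε ^ 3 * (∫ y, ∫ φ in a..b, potentialDensity₂ X v₄ θ y φ) := by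
  have hX₁ : ContDiff ℝ 1 (pd (1, 0) X) := contDiff_pd (n := 1) hX _
  have hX₂c : Continuous (pd (1, 0) (pd (1, 0) X)) := (contDiff_pd (n := 0) hX₁ _).continuous
  have hX₁c : Continuous (pd (1, 0) X) := hX₁.continuous
  have hXc : Continuous X := hX.continuous
  simp only [potentialDensityRemainder]
  rw [integral_intervalIntegral_sub (R := R), integral_intervalIntegral_sub (R := R),
    integral_intervalIntegral_sub (R := R)]
  · simp only [intervalIntegral.integral_const_mul, integral_const_mul]
  all_goals first
    | (intro y φ hy; simp [potentialDensity, potentialDensity₀, potentialDensity₁,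
        potentialDensity₂, hXR y φ hy, hΦ₀0])
    | (simp only [Function.uncurry_def, potentialDensity, potentialDensity₀, potentialDensity₁,
        potentialDensity₂]; fun_prop)

end Density

theorem nls_potential_energy_expansion_general
    (Φ₀ : ℝ → ℝ) (hΦ₀ : ContDiff ℝ (⊤ : ℕ∞) Φ₀)
    (hΦ₀0 : Φ₀ 0 = 0) (hΦ₀1 : deriv Φ₀ 0 = 0)
    (v₂ v₃ v₄ : ℝ) (hv₂ : v₂ = iteratedDeriv 2 Φ₀ 0) (hv₃ : v₃ = iteratedDeriv 3 Φ₀ 0)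
    (hv₄ : v₄ = iteratedDeriv 4 Φ₀ 0)
    (θ : ℝ)
    (X : ℝ × ℝ → ℝ) (hX : ContDiff ℝ (⊤ : ℕ∞) X)
    (hsupp : ∃ R : ℝ, ∀ y φ : ℝ, R < |y| → X (y, φ) = 0) :
    ∃ C > (0 : ℝ), ∃ ε₀ > (0 : ℝ), ∀ ε : ℝ, 0 < ε → ε < ε₀ →
      |ε⁻¹ * (∫ y : ℝ, ∫ φ in (0 : ℝ)..(2 * Real.pi),
            (-(ε ^ 2 / 2) * X (y, φ)
                * (X (y + ε, φ + θ) + X (y - ε, φ - θ) - 2 * X (y, φ))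
              + Φ₀ (ε * X (y, φ))))
          - ε * (∫ y : ℝ, ∫ φ in (0 : ℝ)..(2 * Real.pi),
            (-(1 / 2) * X (y, φ) * (X (y, φ + θ) + X (y, φ - θ) - 2 * X (y, φ))
              + (v₂ / 2) * X (y, φ) ^ 2))
          - ε ^ 2 * (∫ y : ℝ, ∫ φ in (0 : ℝ)..(2 * Real.pi),
            (-(1 / 2) * X (y, φ) * (pd (1, 0) X (y, φ + θ) - pd (1, 0) X (y, φ - θ))
              + (v₃ / 6) * X (y, φ) ^ 3))
          - ε ^ 3 * (∫ y : ℝ, ∫ φ in (0 : ℝ)..(2 * Real.pi),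
            (-(1 / 4) * X (y, φ)
                * (pd (1, 0) (pd (1, 0) X) (y, φ + θ)
                    + pd (1, 0) (pd (1, 0) X) (y, φ - θ))
              + (v₄ / 24) * X (y, φ) ^ 4))|
        ≤ C * ε ^ 4 := by
  obtain ⟨R, hR⟩ := hsupp
  have hXR : ∀ y φ, |R| < |y| → X (y, φ) = 0 := fun y φ hy => hR y φ ((le_abs_self R).trans_lt hy)
  subst hv₂ hv₃ hv₄
  have hΦ₅ : ContDiff ℝ 5 Φ₀ := hΦ₀.of_le (WithTop.coe_le_coe.mpr le_top)
  have hX₃ : ContDiff ℝ 3 X := hX.of_le (WithTop.coe_le_coe.mpr le_top)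
  obtain ⟨K, hK⟩ := exists_abs_potentialDensityRemainder_le (θ := θ) hΦ₅ hΦ₀0 hΦ₀1 hX₃ |R| 0
    (2 * Real.pi)
  refine ⟨|K| * (2 * Real.pi) * (2 * |R|) + 1, by positivity, 1, one_pos, fun ε hε hε1 => ?_⟩
  calc _ = |∫ y, ∫ φ in (0 : ℝ)..(2 * Real.pi), potentialDensityRemainder Φ₀ X
          (iteratedDeriv 2 Φ₀ 0) (iteratedDeriv 3 Φ₀ 0) (iteratedDeriv 4 Φ₀ 0) θ ε y φ| := by
        rw [integral_intervalIntegral_potentialDensityRemainder hΦ₀.continuous hΦ₀0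
          (hX₃.of_le (by norm_num)) hXR]
        rfl
    _ ≤ K * ε ^ 4 * |2 * Real.pi - 0| * (2 * |R|) := by
        refine abs_integral_intervalIntegral_le (abs_nonneg R) (fun y φ hy => ?_) fun y hy φ hφ =>
          hK ε ⟨hε, hε1.le⟩ y hy φ ?_
        · exact potentialDensityRemainder_eq_zero hΦ₀0 (hXR y φ hy) ε
        · rw [← uIcc_of_le Real.two_pi_pos.le]
          exact uIoc_subset_uIcc hφ
    _ ≤ (|K| * (2 * Real.pi) * (2 * |R|) + 1) * ε ^ 4 := by
        have hK_le : K * (2 * Real.pi) * (2 * |R|) ≤ |K| * (2 * Real.pi) * (2 * |R|) := by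
          gcongr
          exact le_abs_self K
        rw [sub_zero, abs_of_pos Real.two_pi_pos]
        nlinarith [pow_pos hε 4]

/-- Expansion of the nlS-scaled potential energy of the Klein–Gordon chain:
`𝕍(ε) = ε 𝕍₀ + ε² 𝕍₁ + ε³ 𝕍₂ + O(ε⁴)` with the explicit integrals `𝕍₀, 𝕍₁, 𝕍₂`.
Here `X = X(y, φ)` is smooth, `2π`-periodic in `φ` and compactly supported in `y`. -/
theorem nls_potential_energy_expansion
    (Φ₀ : ℝ → ℝ) (hΦ₀ : ContDiff ℝ (⊤ : ℕ∞) Φ₀)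
    (hΦ₀0 : Φ₀ 0 = 0) (hΦ₀1 : deriv Φ₀ 0 = 0)
    (v₂ v₃ v₄ : ℝ) (hv₂ : v₂ = iteratedDeriv 2 Φ₀ 0) (hv₃ : v₃ = iteratedDeriv 3 Φ₀ 0)
    (hv₄ : v₄ = iteratedDeriv 4 Φ₀ 0)
    (θ : ℝ)
    (X : ℝ × ℝ → ℝ) (hX : ContDiff ℝ (⊤ : ℕ∞) X)
    (hper : ∀ y φ : ℝ, X (y, φ + 2 * Real.pi) = X (y, φ))
    (hsupp : ∃ R : ℝ, ∀ y φ : ℝ, R < |y| → X (y, φ) = 0) :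
    ∃ C > (0 : ℝ), ∃ ε₀ > (0 : ℝ), ∀ ε : ℝ, 0 < ε → ε < ε₀ →
      |ε⁻¹ * (∫ y : ℝ, ∫ φ in (0 : ℝ)..(2 * Real.pi),
            (-(ε ^ 2 / 2) * X (y, φ)
                * (X (y + ε, φ + θ) + X (y - ε, φ - θ) - 2 * X (y, φ))
              + Φ₀ (ε * X (y, φ))))
          - ε * (∫ y : ℝ, ∫ φ in (0 : ℝ)..(2 * Real.pi),
            (-(1 / 2) * X (y, φ) * (X (y, φ + θ) + X (y, φ - θ) - 2 * X (y, φ))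
              + (v₂ / 2) * X (y, φ) ^ 2))
          - ε ^ 2 * (∫ y : ℝ, ∫ φ in (0 : ℝ)..(2 * Real.pi),
            (-(1 / 2) * X (y, φ) * (pd (1, 0) X (y, φ + θ) - pd (1, 0) X (y, φ - θ))
              + (v₃ / 6) * X (y, φ) ^ 3))
          - ε ^ 3 * (∫ y : ℝ, ∫ φ in (0 : ℝ)..(2 * Real.pi),
            (-(1 / 4) * X (y, φ)
                * (pd (1, 0) (pd (1, 0) X) (y, φ + θ)
                    + pd (1, 0) (pd (1, 0) X) (y, φ - θ))
              + (v₄ / 24) * X (y, φ) ^ 4))|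
        ≤ C * ε ^ 4 :=
  nls_potential_energy_expansion_general Φ₀ hΦ₀ hΦ₀0 hΦ₀1 v₂ v₃ v₄ hv₂ hv₃ hv₄ θ X hX hsupp
end

section
/- Let θ, ω ∈ ℝ and v₂ > 0 satisfy the dispersion relation ω² = v₂ + 2(1 − cos θ), and assume the non-resonance condition: for every m ∈ ℤ with |m| ≥ 2, m² ω² ≠ v₂ + 2(1 − cos(mθ)). Let X : ℝ × ℝ → ℝ be C² and 2π-periodic in its second argument φ, and suppose ω² ∂_{φφ}X(y,φ) = X(y, φ+θ) + X(y, φ−θ) − 2X(y,φ) − v₂ X(y,φ) for all (y,φ) ∈ ℝ². Then there exist functions B₁, B₂ : ℝ → ℝ such that X(y,φ) = π^{−1/2} ( B₁(y) cos φ + B₂(y) sin φ ) for all (y,φ); i.e. every solution of the leading-order equation is a modulated first harmonic. -/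
/-!
Fix `y` and expand `φ ↦ X (y, φ)` in its Fourier series on `ℝ / 2πℤ`. Differentiation multiplies
the `n`-th coefficient by `i n` and translation by `θ` multiplies it by `e^{i n θ}`, so the
equation becomes `(v₂ + 2 (1 - cos nθ) - n² ω²) X̂ₙ = 0`. The factor is `v₂ ≠ 0` for `n = 0` and
nonzero for `|n| ≥ 2` by non-resonance, so only `X̂_{±1}` survive; a continuous function with
finitely many nonzero Fourier coefficients is the sum of its Fourier series, and its real part is
`a cos φ + b sin φ`.
-/

open Complex Real Function AddCircle intervalIntegral

namespace Function.Periodic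

variable {T : ℝ} {f f' : ℝ → ℂ}

theorem of_hasDerivAt (hf : Periodic f T) (hd : ∀ x, HasDerivAt f (f' x) x) :
    Periodic f' T := fun x => by
  have h := (hd (x + T)).comp_add_const x T
  rw [show (fun y => f (y + T)) = f from funext hf] at h
  exact h.unique (hd x)

def toContinuousMap (hf : Periodic f T) (hc : Continuous f) : C(AddCircle T, ℂ) :=
  ⟨hf.lift, continuous_quot_lift _ hc⟩

variable [Fact (0 < T)]

theorem fourierCoeff_lift_add_const (hf : Periodic f T) (s : ℝ) (n : ℤ) :
    fourierCoeff (hf.add_const s).lift n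
      = fourier n (s : AddCircle T) * fourierCoeff hf.lift n := by
  rw [fourierCoeff_eq_intervalIntegral _ n 0, fourierCoeff_eq_intervalIntegral _ n s,
    mul_smul_comm]
  congr 1
  calc ∫ x in (0 : ℝ)..0 + T, fourier (-n) (x : AddCircle T) * f (x + s)
      = ∫ x in (0 : ℝ)..0 + T, fourier n (s : AddCircle T) *
          (fourier (-n) ((x + s : ℝ) : AddCircle T) * f (x + s)) := by
        refine integral_congr fun x _ => ?_
        simp only [fourier_coe_apply, ← mul_assoc, ← Complex.exp_add]
        congr 2; push_cast; ring
    _ = fourier n (s : AddCircle T) * ∫ x in s..s + T, fourier (-n) (x : AddCircle T) * f x := by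
        rw [integral_const_mul, integral_comp_add_right
          (fun x => fourier (-n) (x : AddCircle T) * f x), zero_add, zero_add, add_comm T]

theorem fourierCoeff_lift_of_hasDerivAt (hf : Periodic f T) (hd : ∀ x, HasDerivAt f (f' x) x)
    (hc : Continuous f') (n : ℤ) :
    fourierCoeff (hf.of_hasDerivAt hd).lift n
      = 2 * π * I * n / T * fourierCoeff hf.lift n := by
  have hparts := integral_mul_deriv_eq_deriv_mul_of_hasDerivAt (a := 0) (b := T)
    (u := fun x : ℝ => fourier (-n) (x : AddCircle T)) (v := f)
    ((map_continuous _).comp continuous_quot_mk).continuousOn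
    (continuous_iff_continuousAt.2 fun x => (hd x).continuousAt).continuousOn
    (fun x _ => hasDerivAt_fourier_neg T n x) (fun x _ => hd x)
    (by apply Continuous.intervalIntegrable; fun_prop) (hc.intervalIntegrable _ _)
  have hbdry : f T = f 0 := by simpa using hf 0
  simp only [fourierCoeff_eq_intervalIntegral _ n 0, zero_add, smul_eq_mul, lift_coe, hparts,
    hbdry, coe_period, QuotientAddGroup.mk_zero, sub_self, zero_sub, mul_assoc,
    integral_const_mul, real_smul]
  ring

theorem integrable_lift (hf : Periodic f T) (hc : Continuous f) :
    MeasureTheory.Integrable (hf.lift : AddCircle T → ℂ) haarAddCircle :=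
  (hf.toContinuousMap hc).continuous.integrable_of_hasCompactSupport (.of_compactSpace _)

end Function.Periodic

section

variable {T : ℝ} [Fact (0 < T)]

theorem eq_sum_fourier_of_fourierCoeff_eq_zero (F : C(AddCircle T, ℂ)) (s : Finset ℤ)
    (h : ∀ n ∉ s, fourierCoeff F n = 0) (x : AddCircle T) :
    F x = ∑ n ∈ s, fourierCoeff F n * fourier n x :=
  ((has_pointwise_sum_fourier_series_of_summable
    (summable_of_ne_finset_zero h) x).unique (hasSum_sum_of_ne_finset_zero fun n hn => by
      simp [h n hn]))

end

theorem fourier_coe_two_pi (n : ℤ) (x : ℝ) :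
    fourier n (x : AddCircle (2 * π)) = exp (n * x * I) := by
  rw [fourier_coe_apply]
  congr 1
  push_cast
  field_simp

section LeadingOrder

variable {θ ω v₂ : ℝ} {f f' f'' : ℝ → ℂ}

local instance : Fact (0 < 2 * π) := ⟨two_pi_pos⟩

theorem leading_order_symbol_mul_fourierCoeff_eq_zero (hf : Periodic f (2 * π))
    (hd : ∀ x, HasDerivAt f (f' x) x) (hd' : ∀ x, HasDerivAt f' (f'' x) x) (hc : Continuous f'')
    (heq : ∀ x, ω ^ 2 * f'' x = f (x + θ) + f (x - θ) - 2 * f x - v₂ * f x) (n : ℤ) :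
    ((v₂ + 2 * (1 - Real.cos (n * θ)) - n ^ 2 * ω ^ 2 : ℝ) : ℂ) * fourierCoeff hf.lift n = 0 := by
  have hc' : Continuous f' := continuous_iff_continuousAt.2 fun x => (hd' x).continuousAt
  have hc₀ : Continuous f := continuous_iff_continuousAt.2 fun x => (hd x).continuousAt
  have hf' := hf.of_hasDerivAt hd
  have hf'' := hf'.of_hasDerivAt hd'
  -- regrouped so that only sums occur: `fourierCoeff.add` has no subtraction counterpart
  have hcircle : (fun z => (ω : ℂ) ^ 2 * hf''.lift z) + (fun z => (2 + v₂ : ℂ) * hf.lift z)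
      = (hf.add_const θ).lift + (hf.add_const (-θ)).lift := by
    ext z
    induction z using QuotientAddGroup.induction_on with
    | H x =>
      simp only [Pi.add_apply, Periodic.lift_coe, ← sub_eq_add_neg]
      linear_combination heq x
  have hcoeff := congrArg (fourierCoeff · n) hcircle
  rw [fourierCoeff.add, fourierCoeff.add, Pi.add_apply, Pi.add_apply, fourierCoeff.const_mul,
    fourierCoeff.const_mul,
    hf'.fourierCoeff_lift_of_hasDerivAt hd' hc, hf.fourierCoeff_lift_of_hasDerivAt hd hc',
    hf.fourierCoeff_lift_add_const, hf.fourierCoeff_lift_add_const, fourier_coe_two_pi,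
    fourier_coe_two_pi] at hcoeff
  · have hfreq : (2 * π * I * n / ↑(2 * π) : ℂ) = n * I := by push_cast; field_simp
    rw [hfreq] at hcoeff
    push_cast [mul_neg] at hcoeff ⊢
    linear_combination hcoeff - fourierCoeff hf.lift n * Complex.two_cos (n * θ)
      - (ω : ℂ) ^ 2 * n ^ 2 * fourierCoeff hf.lift n * I_sq
  exacts [(hf.add_const θ).integrable_lift (hc₀.comp (continuous_add_const θ)),
    (hf.add_const (-θ)).integrable_lift (hc₀.comp (continuous_add_const (-θ))),
    (hf''.integrable_lift hc).const_mul _, (hf.integrable_lift hc₀).const_mul _]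

theorem leading_order_symbol_ne_zero (hv₂ : v₂ ≠ 0)
    (hnr : ∀ m : ℤ, 2 ≤ |m| → (m : ℝ) ^ 2 * ω ^ 2 ≠ v₂ + 2 * (1 - Real.cos (m * θ)))
    {n : ℤ} (h₁ : n ≠ 1) (h₂ : n ≠ -1) :
    v₂ + 2 * (1 - Real.cos (n * θ)) - n ^ 2 * ω ^ 2 ≠ 0 := by
  rcases eq_or_ne n 0 with rfl | h₀
  · simpa using hv₂
  · exact sub_ne_zero.2 (hnr n (by cases abs_cases n <;> omega)).symm

theorem eq_first_harmonics_of_leading_order (hv₂ : v₂ ≠ 0)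
    (hnr : ∀ m : ℤ, 2 ≤ |m| → (m : ℝ) ^ 2 * ω ^ 2 ≠ v₂ + 2 * (1 - Real.cos (m * θ)))
    (hf : Periodic f (2 * π)) (hd : ∀ x, HasDerivAt f (f' x) x)
    (hd' : ∀ x, HasDerivAt f' (f'' x) x) (hc : Continuous f'')
    (heq : ∀ x, ω ^ 2 * f'' x = f (x + θ) + f (x - θ) - 2 * f x - v₂ * f x) :
    ∃ c₁ c₂ : ℂ, ∀ x : ℝ, f x = c₁ * exp (x * I) + c₂ * exp (-(x * I)) := by
  have hc₀ : Continuous f := continuous_iff_continuousAt.2 fun x => (hd x).continuousAt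
  have hvanish : ∀ n ∉ ({1, -1} : Finset ℤ), fourierCoeff (hf.toContinuousMap hc₀) n = 0 := by
    intro n hn
    simp only [Finset.mem_insert, Finset.mem_singleton, not_or] at hn
    exact (mul_eq_zero.1 (leading_order_symbol_mul_fourierCoeff_eq_zero hf hd hd' hc heq n))
      |>.resolve_left (ofReal_ne_zero.2 (leading_order_symbol_ne_zero hv₂ hnr hn.1 hn.2))
  refine ⟨fourierCoeff hf.lift 1, fourierCoeff hf.lift (-1), fun x => ?_⟩
  have h := eq_sum_fourier_of_fourierCoeff_eq_zero _ _ hvanish x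
  rw [Finset.sum_pair (by decide), fourier_coe_two_pi, fourier_coe_two_pi] at h
  simp only [Int.cast_one, one_mul, Int.cast_neg, neg_mul] at h
  exact h

theorem exists_eq_cos_sin_of_leading_order {g : ℝ → ℝ} (hv₂ : v₂ ≠ 0)
    (hnr : ∀ m : ℤ, 2 ≤ |m| → (m : ℝ) ^ 2 * ω ^ 2 ≠ v₂ + 2 * (1 - Real.cos (m * θ)))
    (hg : ContDiff ℝ 2 g) (hper : Periodic g (2 * π))
    (heq : ∀ φ, ω ^ 2 * deriv (deriv g) φ = g (φ + θ) + g (φ - θ) - 2 * g φ - v₂ * g φ) :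
    ∃ a b : ℝ, ∀ φ, g φ = a * Real.cos φ + b * Real.sin φ := by
  have hg' : ContDiff ℝ 1 (deriv g) := hg.deriv'
  obtain ⟨c₁, c₂, hrep⟩ := eq_first_harmonics_of_leading_order (f := fun x => (g x : ℂ)) hv₂
    hnr (fun x => by simp [hper x])
    (fun x => (hg.differentiable two_ne_zero x).hasDerivAt.ofReal_comp)
    (fun x => (hg'.differentiable one_ne_zero x).hasDerivAt.ofReal_comp)
    (continuous_ofReal.comp (hg'.continuous_deriv le_rfl))
    (fun x => by exact_mod_cast heq x)
  refine ⟨c₁.re + c₂.re, c₂.im - c₁.im, fun φ => ?_⟩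
  have h := congrArg re (hrep φ)
  rw [← neg_mul, ← ofReal_neg] at h
  simp only [ofReal_re, add_re, mul_re, exp_ofReal_mul_I_re, exp_ofReal_mul_I_im,
    Real.cos_neg, Real.sin_neg] at h
  rw [h]
  ring

end LeadingOrder

theorem leading_order_solutions_are_modulated_first_harmonics_general
    (θ ω v₂ : ℝ) (hv₂ : 0 < v₂)
    (hnr : ∀ m : ℤ, 2 ≤ |m| →
      (m : ℝ) ^ 2 * ω ^ 2 ≠ v₂ + 2 * (1 - Real.cos ((m : ℝ) * θ)))
    (X : ℝ × ℝ → ℝ) (hX : ContDiff ℝ 2 X)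
    (hper : ∀ y φ : ℝ, X (y, φ + 2 * Real.pi) = X (y, φ))
    (heq : ∀ y φ : ℝ,
      ω ^ 2 * deriv (deriv (fun ψ => X (y, ψ))) φ
        = X (y, φ + θ) + X (y, φ - θ) - 2 * X (y, φ) - v₂ * X (y, φ)) :
    ∃ B₁ B₂ : ℝ → ℝ, ∀ y φ : ℝ,
      X (y, φ) = (Real.sqrt Real.pi)⁻¹ * (B₁ y * Real.cos φ + B₂ y * Real.sin φ) := by
  have hslice (y : ℝ) : ∃ a b : ℝ, ∀ φ, X (y, φ) = a * Real.cos φ + b * Real.sin φ :=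
    exists_eq_cos_sin_of_leading_order hv₂.ne' hnr
      (hX.comp (contDiff_const.prodMk contDiff_id)) (hper y) (heq y)
  choose a b hab using hslice
  refine ⟨fun y => √π * a y, fun y => √π * b y, fun y φ => ?_⟩
  have hπ : √π ≠ 0 := (Real.sqrt_pos.2 pi_pos).ne'
  rw [hab y φ]
  field_simp

/-- Under the dispersion relation `ω² = v₂ + 2(1 − cos θ)` and the non-resonance condition
`m²ω² ≠ v₂ + 2(1 − cos(mθ))` for `|m| ≥ 2`, every `2π`-periodic (in `φ`) `C²` solution of
the leading-order equation `ω² X_φφ = Δ_{0,θ}X − v₂X` is a modulated first harmonic: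
`X(y,φ) = π^{-1/2}(B₁(y)cos φ + B₂(y)sin φ)`. -/
theorem leading_order_solutions_are_modulated_first_harmonics
    (θ ω v₂ : ℝ) (hv₂ : 0 < v₂)
    (hdisp : ω ^ 2 = v₂ + 2 * (1 - Real.cos θ))
    (hnr : ∀ m : ℤ, 2 ≤ |m| →
      (m : ℝ) ^ 2 * ω ^ 2 ≠ v₂ + 2 * (1 - Real.cos ((m : ℝ) * θ)))
    (X : ℝ × ℝ → ℝ) (hX : ContDiff ℝ 2 X)
    (hper : ∀ y φ : ℝ, X (y, φ + 2 * Real.pi) = X (y, φ))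
    (heq : ∀ y φ : ℝ,
      ω ^ 2 * deriv (deriv (fun ψ => X (y, ψ))) φ
        = X (y, φ + θ) + X (y, φ - θ) - 2 * X (y, φ) - v₂ * X (y, φ)) :
    ∃ B₁ B₂ : ℝ → ℝ, ∀ y φ : ℝ,
      X (y, φ) = (Real.sqrt Real.pi)⁻¹ * (B₁ y * Real.cos φ + B₂ y * Real.sin φ) :=
  leading_order_solutions_are_modulated_first_harmonics_general θ ω v₂ hv₂ hnr X hX hper heq
end

section
/- Let B₁, B₂ ∈ C_c^∞(ℝ), θ, ω, c, v₃ ∈ ℝ, and define X₀(y,φ) = π^{−1/2} ( B₁(y) cos φ + B₂(y) sin φ ). Then: (a) ∫_ℝ ∫_0^{2π} ∂_yX₀(y,φ) ∂_φX₀(y,φ) dφ dy = 2 ∫_ℝ B₁'(y) B₂(y) dy; (b) −½ ∫_ℝ ∫_0^{2π} X₀(y,φ) ( ∂_yX₀(y, φ+θ) − ∂_yX₀(y, φ−θ) ) dφ dy + (v₃/6) ∫_ℝ ∫_0^{2π} X₀(y,φ)³ dφ dy = 2 sin θ ∫_ℝ B₁'(y) B₂(y) dy. Consequently, setting 𝕂₁(X₀)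 = −ωc ∫∫ ∂_yX₀ ∂_φX₀ dφ dy and 𝕍₁(X₀) equal to the left-hand side of (b), if cω = −sin θ then 𝕂₁(X₀) − 𝕍₁(X₀) = 0; i.e. the next-to-leading-order Lagrangian vanishes on the leading-order solution manifold exactly when the frame moves with the group velocity. -/
/-- The leading-order modulated first harmonic `X₀(y,φ) = π^{-1/2}(B₁(y)cos φ + B₂(y)sin φ)`. -/
noncomputable def X0 (B₁ B₂ : ℝ → ℝ) (p : ℝ × ℝ) : ℝ :=
  (Real.sqrt Real.pi)⁻¹ * (B₁ p.1 * Real.cos p.2 + B₂ p.1 * Real.sin p.2)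

/-!
For fixed `y`, the functions `X₀`, `∂_y X₀` and `∂_φ X₀` are first harmonics `a cos φ + b sin φ`
in `φ`, and `∂_φ` maps the coefficients `(a, b)` to `(b, -a)`, as does the symmetric difference of
the shifts by `±θ` up to the factor `2 sin θ`. Over a period, the product of two first harmonics
integrates to `π` times the dot product of their coefficients, while the cube of a first harmonic
integrates to zero because it is `π`-antiperiodic. Both (a) and (b) thereby reduce to
`∫ (B₁' B₂ - B₁ B₂')`, which is `2 ∫ B₁' B₂` by integration by parts.
-/

open Real MeasureTheory

theorem Function.Antiperiodic.intervalIntegral_add_two_mul_eq_zero {E : Type*}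
    [NormedAddCommGroup E] [NormedSpace ℝ E] {f : ℝ → E} {T : ℝ}
    (hf : Function.Antiperiodic f T) {a : ℝ} (hfi : IntervalIntegrable f volume a (a + T)) :
    ∫ x in a..a + 2 * T, f x = 0 := by
  have hfi' : IntervalIntegrable f volume (a + T) (a + 2 * T) := by
    have := (hfi.comp_sub_right T).neg
    rw [show a + T + T = a + 2 * T by ring] at this
    convert this using 1
    funext x
    simp [hf.sub_eq]
  have hshift : ∫ x in a + T..a + 2 * T, f x = -∫ x in a..a + T, f x := by
    rw [show a + 2 * T = a + T + T by ring, ← intervalIntegral.integral_comp_add_right,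
      ← intervalIntegral.integral_neg]
    simp only [hf _]
  rw [← intervalIntegral.integral_add_adjacent_intervals hfi hfi', hshift, add_neg_cancel]

theorem integral_cos_sin_pow_three (a b : ℝ) :
    ∫ φ in 0..2 * π, (a * cos φ + b * sin φ) ^ 3 = 0 := by
  have hanti : Function.Antiperiodic (fun φ => (a * cos φ + b * sin φ) ^ 3) π := fun φ => by
    simp only [cos_add_pi, sin_add_pi]; ring
  simpa using hanti.intervalIntegral_add_two_mul_eq_zero (a := 0)
    (Continuous.intervalIntegrable (by fun_prop) _ _)

theorem integral_cos_sin_mul_cos_sin (p q r t : ℝ) :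
    ∫ φ in 0..2 * π, (p * cos φ + q * sin φ) * (r * cos φ + t * sin φ)
      = π * (p * r + q * t) := by
  have hexp : ∀ φ, (p * cos φ + q * sin φ) * (r * cos φ + t * sin φ)
      = p * r * cos φ ^ 2 + (p * t + q * r) * (sin φ * cos φ) + q * t * sin φ ^ 2 := fun φ => by ring
  simp_rw [hexp]
  rw [intervalIntegral.integral_add, intervalIntegral.integral_add,
    intervalIntegral.integral_const_mul, intervalIntegral.integral_const_mul,
    intervalIntegral.integral_const_mul]
  · simp only [integral_cos_sq, integral_sin_mul_cos₁, integral_sin_sq, cos_two_pi, sin_two_pi,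
      cos_zero, sin_zero]
    ring
  all_goals exact Continuous.intervalIntegrable (by fun_prop) _ _

theorem pd_one_zero_eq_deriv {f : ℝ × ℝ → ℝ} {y φ : ℝ} (hf : DifferentiableAt ℝ f (y, φ)) :
    pd (1, 0) f (y, φ) = deriv (fun x => f (x, φ)) y :=
  ((hf.hasFDerivAt.comp_hasDerivAt y
    ((hasDerivAt_id y).prodMk (hasDerivAt_const y φ))).deriv).symm

theorem pd_zero_one_eq_deriv {f : ℝ × ℝ → ℝ} {y φ : ℝ} (hf : DifferentiableAt ℝ f (y, φ)) :
    pd (0, 1) f (y, φ) = deriv (fun x => f (y, x)) φ :=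
  ((hf.hasFDerivAt.comp_hasDerivAt φ
    ((hasDerivAt_const φ y).prodMk (hasDerivAt_id φ))).deriv).symm

section X0

variable {B₁ B₂ : ℝ → ℝ}

theorem differentiable_X0 (hB₁ : Differentiable ℝ B₁) (hB₂ : Differentiable ℝ B₂) :
    Differentiable ℝ (X0 B₁ B₂) := by
  unfold X0
  fun_prop

theorem pd_one_zero_X0 (hB₁ : Differentiable ℝ B₁) (hB₂ : Differentiable ℝ B₂) (y φ : ℝ) :
    pd (1, 0) (X0 B₁ B₂) (y, φ) = X0 (deriv B₁) (deriv B₂) (y, φ) := by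
  rw [pd_one_zero_eq_deriv (differentiable_X0 hB₁ hB₂ _)]
  exact ((((hB₁ y).hasDerivAt.mul_const (cos φ)).add
    ((hB₂ y).hasDerivAt.mul_const (sin φ))).const_mul _).deriv

theorem pd_zero_one_X0 (hB₁ : Differentiable ℝ B₁) (hB₂ : Differentiable ℝ B₂) (y φ : ℝ) :
    pd (0, 1) (X0 B₁ B₂) (y, φ) = X0 B₂ (-B₁) (y, φ) := by
  rw [pd_zero_one_eq_deriv (differentiable_X0 hB₁ hB₂ _)]
  refine ((((hasDerivAt_cos φ).const_mul (B₁ y)).add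
    ((hasDerivAt_sin φ).const_mul (B₂ y))).const_mul _).deriv.trans ?_
  simp only [X0, Pi.neg_apply]
  ring

theorem X0_add_sub_X0_sub (y φ θ : ℝ) :
    X0 B₁ B₂ (y, φ + θ) - X0 B₁ B₂ (y, φ - θ) = 2 * sin θ * X0 B₂ (-B₁) (y, φ) := by
  simp only [X0, Pi.neg_apply, cos_add, cos_sub, sin_add, sin_sub]
  ring

theorem integral_X0_mul_X0 (C₁ C₂ : ℝ → ℝ) (y : ℝ) :
    ∫ φ in 0..2 * π, X0 B₁ B₂ (y, φ) * X0 C₁ C₂ (y, φ) = B₁ y * C₁ y + B₂ y * C₂ y := by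
  simp only [X0, mul_mul_mul_comm _ (_ + _), intervalIntegral.integral_const_mul,
    integral_cos_sin_mul_cos_sin]
  have hπ : √π ^ 2 = π := sq_sqrt pi_pos.le
  field_simp
  rw [hπ]

theorem integral_X0_pow_three (y : ℝ) : ∫ φ in 0..2 * π, X0 B₁ B₂ (y, φ) ^ 3 = 0 := by
  simp only [X0, mul_pow, intervalIntegral.integral_const_mul, integral_cos_sin_pow_three,
    mul_zero]

end X0

theorem integral_deriv_mul_sub_mul_deriv {u v : ℝ → ℝ} (hu : ContDiff ℝ 1 u)
    (hv : ContDiff ℝ 1 v) (hvs : HasCompactSupport v) :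
    ∫ x, (deriv u x * v x - u x * deriv v x) = 2 * ∫ x, deriv u x * v x := by
  have hu'v : Integrable fun x => deriv u x * v x :=
    (hu.continuous_deriv le_rfl |>.mul hv.continuous).integrable_of_hasCompactSupport
      hvs.mul_left
  have huv' : Integrable fun x => u x * deriv v x :=
    (hu.continuous.mul (hv.continuous_deriv le_rfl)).integrable_of_hasCompactSupport
      hvs.deriv.mul_left
  have huv : Integrable fun x => u x * v x :=
    (hu.continuous.mul hv.continuous).integrable_of_hasCompactSupport hvs.mul_left
  have hparts : ∫ x, u x * deriv v x = -∫ x, deriv u x * v x :=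
    integral_mul_deriv_eq_deriv_mul_of_integrable
      (fun x _ => (hu.differentiable one_ne_zero x).hasDerivAt)
      (fun x _ => (hv.differentiable one_ne_zero x).hasDerivAt) huv' hu'v huv
  rw [integral_sub hu'v huv', hparts]
  ring

theorem nls_next_to_leading_order_cancellation_general
    (B₁ B₂ : ℝ → ℝ)
    (hB₁ : ContDiff ℝ (⊤ : ℕ∞) B₁)
    (hB₂ : ContDiff ℝ (⊤ : ℕ∞) B₂) (hB₂s : HasCompactSupport B₂)
    (θ ω c v₃ : ℝ) :
    -- (a)
    (∫ y : ℝ, ∫ φ in (0 : ℝ)..(2 * Real.pi),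
        pd (1, 0) (X0 B₁ B₂) (y, φ) * pd (0, 1) (X0 B₁ B₂) (y, φ))
      = 2 * (∫ y : ℝ, deriv B₁ y * B₂ y) ∧
    -- (b)
    (-(1 / 2) * (∫ y : ℝ, ∫ φ in (0 : ℝ)..(2 * Real.pi),
          X0 B₁ B₂ (y, φ)
            * (pd (1, 0) (X0 B₁ B₂) (y, φ + θ) - pd (1, 0) (X0 B₁ B₂) (y, φ - θ)))
        + (v₃ / 6) * (∫ y : ℝ, ∫ φ in (0 : ℝ)..(2 * Real.pi), (X0 B₁ B₂ (y, φ)) ^ 3))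
      = 2 * Real.sin θ * (∫ y : ℝ, deriv B₁ y * B₂ y) ∧
    -- consequence: 𝕂₁(X₀) − 𝕍₁(X₀) = 0 in the group-velocity frame
    (c * ω = -Real.sin θ →
      (-(ω * c) * (∫ y : ℝ, ∫ φ in (0 : ℝ)..(2 * Real.pi),
          pd (1, 0) (X0 B₁ B₂) (y, φ) * pd (0, 1) (X0 B₁ B₂) (y, φ)))
        - (-(1 / 2) * (∫ y : ℝ, ∫ φ in (0 : ℝ)..(2 * Real.pi),
            X0 B₁ B₂ (y, φ)
              * (pd (1, 0) (X0 B₁ B₂) (y, φ + θ) - pd (1, 0) (X0 B₁ B₂) (y, φ - θ)))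
          + (v₃ / 6) * (∫ y : ℝ, ∫ φ in (0 : ℝ)..(2 * Real.pi), (X0 B₁ B₂ (y, φ)) ^ 3))
        = 0) := by
  have hB₁' : ContDiff ℝ 1 B₁ := hB₁.of_le (by exact_mod_cast le_top)
  have hB₂' : ContDiff ℝ 1 B₂ := hB₂.of_le (by exact_mod_cast le_top)
  have d₁ := hB₁'.differentiable one_ne_zero
  have d₂ := hB₂'.differentiable one_ne_zero
  have hW := integral_deriv_mul_sub_mul_deriv hB₁' hB₂' hB₂s
  have ha : (∫ y : ℝ, ∫ φ in (0 : ℝ)..(2 * π),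
      pd (1, 0) (X0 B₁ B₂) (y, φ) * pd (0, 1) (X0 B₁ B₂) (y, φ))
        = 2 * (∫ y : ℝ, deriv B₁ y * B₂ y) := by
    simp_rw [pd_one_zero_X0 d₁ d₂, pd_zero_one_X0 d₁ d₂, integral_X0_mul_X0]
    rw [← hW]
    congr with y
    simp only [Pi.neg_apply]
    ring
  have hb : (-(1 / 2) * (∫ y : ℝ, ∫ φ in (0 : ℝ)..(2 * π),
        X0 B₁ B₂ (y, φ)
          * (pd (1, 0) (X0 B₁ B₂) (y, φ + θ) - pd (1, 0) (X0 B₁ B₂) (y, φ - θ)))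
      + (v₃ / 6) * (∫ y : ℝ, ∫ φ in (0 : ℝ)..(2 * π), (X0 B₁ B₂ (y, φ)) ^ 3))
        = 2 * sin θ * (∫ y : ℝ, deriv B₁ y * B₂ y) := by
    simp_rw [pd_one_zero_X0 d₁ d₂, X0_add_sub_X0_sub, mul_left_comm (X0 B₁ B₂ _),
      intervalIntegral.integral_const_mul, integral_X0_mul_X0, integral_X0_pow_three]
    have hinner : ∫ y, (B₁ y * deriv B₂ y + B₂ y * (-deriv B₁) y)
        = -(2 * ∫ y, deriv B₁ y * B₂ y) := by
      rw [← hW, ← integral_neg]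
      congr with y
      simp only [Pi.neg_apply]
      ring
    rw [integral_zero, integral_const_mul, hinner]
    ring
  refine ⟨ha, hb, fun hcω => ?_⟩
  rw [ha, hb]
  linear_combination (-2 * ∫ y : ℝ, deriv B₁ y * B₂ y) * hcω

/-- Next-to-leading-order terms on the leading-order solution manifold of the nlS reduction:
(a) `∫∫ ∂_yX₀ ∂_φX₀ = 2∫B₁'B₂`; (b) the next-to-leading potential term equals
`2 sin θ ∫B₁'B₂`; consequently, if `cω = −sin θ` (group-velocity frame) then
`𝕂₁(X₀) − 𝕍₁(X₀) = 0`, i.e. the next-to-leading-order Lagrangian vanishes on the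
leading-order solution manifold. -/
theorem nls_next_to_leading_order_cancellation
    (B₁ B₂ : ℝ → ℝ)
    (hB₁ : ContDiff ℝ (⊤ : ℕ∞) B₁) (hB₁s : HasCompactSupport B₁)
    (hB₂ : ContDiff ℝ (⊤ : ℕ∞) B₂) (hB₂s : HasCompactSupport B₂)
    (θ ω c v₃ : ℝ) :
    -- (a)
    (∫ y : ℝ, ∫ φ in (0 : ℝ)..(2 * Real.pi),
        pd (1, 0) (X0 B₁ B₂) (y, φ) * pd (0, 1) (X0 B₁ B₂) (y, φ))
      = 2 * (∫ y : ℝ, deriv B₁ y * B₂ y) ∧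
    -- (b)
    (-(1 / 2) * (∫ y : ℝ, ∫ φ in (0 : ℝ)..(2 * Real.pi),
          X0 B₁ B₂ (y, φ)
            * (pd (1, 0) (X0 B₁ B₂) (y, φ + θ) - pd (1, 0) (X0 B₁ B₂) (y, φ - θ)))
        + (v₃ / 6) * (∫ y : ℝ, ∫ φ in (0 : ℝ)..(2 * Real.pi), (X0 B₁ B₂ (y, φ)) ^ 3))
      = 2 * Real.sin θ * (∫ y : ℝ, deriv B₁ y * B₂ y) ∧
    -- consequence: 𝕂₁(X₀) − 𝕍₁(X₀) = 0 in the group-velocity frame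
    (c * ω = -Real.sin θ →
      (-(ω * c) * (∫ y : ℝ, ∫ φ in (0 : ℝ)..(2 * Real.pi),
          pd (1, 0) (X0 B₁ B₂) (y, φ) * pd (0, 1) (X0 B₁ B₂) (y, φ)))
        - (-(1 / 2) * (∫ y : ℝ, ∫ φ in (0 : ℝ)..(2 * Real.pi),
            X0 B₁ B₂ (y, φ)
              * (pd (1, 0) (X0 B₁ B₂) (y, φ + θ) - pd (1, 0) (X0 B₁ B₂) (y, φ - θ)))
          + (v₃ / 6) * (∫ y : ℝ, ∫ φ in (0 : ℝ)..(2 * Real.pi), (X0 B₁ B₂ (y, φ)) ^ 3))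
        = 0) :=
  nls_next_to_leading_order_cancellation_general B₁ B₂ hB₁ hB₂ hB₂s θ ω c v₃
end
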